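/- arXiv:math/0611879 — 3 statements merged into one kernel-verified Lean document; each statement's English description precedes it below -/
import Mathlib

section
/- Let M be a unital C*-algebra with a faithful tracial state τ. For a, b ∈ M, the product ab is invertible if and only if both a and b are invertible. -/
/-- In a C*-algebra with faithful tracial state, left invertible implies invertible. -/
theorem aux_left_inv_isUnit
    {M : Type*} [NormedRing M] [StarRing M] [CStarRing M] [NormedAlgebra ℂ M]
    [CompleteSpace M] [StarModule ℂ M]
    (τ : M →ₗ[ℂ] ℂ)
    (hstate : τ 1 = 1)
    (hfaithful : ∀ x : M, τ (star x * x) = 0 → x = 0)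
    (htracial : ∀ x y : M, τ (x * y) = τ (y * x))
    (b u : M) (hub : u * b = 1) : IsUnit b := by
  letI : CStarAlgebra M := { }
  letI := CStarAlgebra.spectralOrder M
  letI := CStarAlgebra.spectralOrderedRing M
  -- M is nontrivial since τ 1 = 1 ≠ 0
  have hnt : Nontrivial M := by
    by_contra h
    rw [not_nontrivial_iff_subsingleton] at h
    have : (1 : M) = 0 := Subsingleton.elim _ _
    rw [this, map_zero] at hstate
    exact one_ne_zero hstate.symm
  -- star b * b is invertible
  have key : (1 : M) ≤ algebraMap ℝ M (‖u‖ ^ 2) * (star b * b) := by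
    have h1 : star u * u ≤ algebraMap ℝ M (‖u‖ ^ 2) :=
      CStarAlgebra.star_mul_le_algebraMap_norm_sq
    have h2 : star b * (star u * u) * b ≤ star b * algebraMap ℝ M (‖u‖ ^ 2) * b :=
      star_left_conjugate_le_conjugate h1 b
    have h3 : star b * (star u * u) * b = 1 := by
      have := congrArg (fun x => star x * x) hub
      simpa [star_mul, mul_assoc] using this
    have h4 : star b * algebraMap ℝ M (‖u‖ ^ 2) * b
        = algebraMap ℝ M (‖u‖ ^ 2) * (star b * b) := by
      rw [← Algebra.commutes (‖u‖ ^ 2) (star b), mul_assoc]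
    rw [h3, h4] at h2
    exact h2
  have hsu : IsUnit (algebraMap ℝ M (‖u‖ ^ 2) * (star b * b)) :=
    CStarAlgebra.isUnit_of_le 1 key isStrictlyPositive_one
  have hu0 : u ≠ 0 := by
    rintro rfl
    rw [zero_mul] at hub
    exact one_ne_zero hub.symm
  have halg : IsUnit (algebraMap ℝ M (‖u‖ ^ 2)) := by
    refine (isUnit_map_iff (algebraMap ℝ M) _).mpr ?_
    · exact (isUnit_iff_ne_zero).mpr (pow_ne_zero 2 (norm_ne_zero_iff.mpr hu0))
  have hsb : IsUnit (star b * b) := by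
    obtain ⟨v, hv⟩ := halg
    have : (↑v⁻¹ : M) * (algebraMap ℝ M (‖u‖ ^ 2) * (star b * b)) = star b * b := by
      rw [← hv, ← mul_assoc, Units.inv_mul, one_mul]
    exact this ▸ (v⁻¹.isUnit.mul hsu)
  obtain ⟨s, hs⟩ := hsb
  -- the inverse candidate
  set c : M := ↑s⁻¹ * star b with hc
  have hcb : c * b = 1 := by
    rw [hc, mul_assoc, ← hs, Units.inv_mul]
  -- p = b * c is a projection with trace 1
  set p : M := b * c with hp
  have hsinv_star : star (↑s⁻¹ : M) = ↑s⁻¹ := by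
    have hstar_s : star (↑s : M) = ↑s := by rw [hs]; exact (IsSelfAdjoint.star_mul_self b)
    have h1 : star (↑s⁻¹ : M) * ↑s = 1 := by
      rw [← hstar_s, ← star_mul, Units.mul_inv, star_one]
    have h2 : (↑s : M) * ↑s⁻¹ = 1 := Units.mul_inv s
    calc star (↑s⁻¹ : M) = star ↑s⁻¹ * (↑s * ↑s⁻¹) := by rw [h2, mul_one]
      _ = (star ↑s⁻¹ * ↑s) * ↑s⁻¹ := by rw [mul_assoc]
      _ = ↑s⁻¹ := by rw [h1, one_mul]
  have hpsa : star p = p := by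
    rw [hp, hc, star_mul, star_mul, star_star, hsinv_star, mul_assoc]
  have hpp : p * p = p := by
    rw [hp]
    conv_lhs => rw [mul_assoc, ← mul_assoc c b c, hcb, one_mul]
  have htp : τ p = 1 := by
    rw [hp, htracial b c, hc, mul_assoc, ← hs, Units.inv_mul, hstate]
  -- q = 1 - p is a projection with trace 0, hence 0 by faithfulness
  have hq : (1 : M) - p = 0 := by
    apply hfaithful
    have hqq : star (1 - p) * (1 - p) = 1 - p := by
      rw [star_sub, star_one, hpsa]
      rw [sub_mul, mul_sub, mul_sub, one_mul, mul_one, hpp]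
      simp
    rw [hqq, map_sub, hstate, htp, sub_self]
  have hbc : b * c = 1 := by
    have : (1 : M) = p := sub_eq_zero.mp hq
    rw [← hp, ← this]
  exact ⟨⟨b, c, hbc, hcb⟩, rfl⟩

/-- In a unital C*-algebra with a faithful tracial state, a product `a * b` is
invertible iff both `a` and `b` are invertible. -/
theorem finite_trace_mul_isUnit_iff
    {M : Type*} [NormedRing M] [StarRing M] [CStarRing M] [NormedAlgebra ℂ M]
    [CompleteSpace M] [StarModule ℂ M]
    (τ : M →ₗ[ℂ] ℂ)
    (hstate : τ 1 = 1)
    (hpos : ∀ x : M, 0 ≤ (τ (star x * x)).re ∧ (τ (star x * x)).im = 0)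
    (hfaithful : ∀ x : M, τ (star x * x) = 0 → x = 0)
    (htracial : ∀ x y : M, τ (x * y) = τ (y * x))
    (a b : M) :
    IsUnit (a * b) ↔ IsUnit a ∧ IsUnit b := by
  constructor
  · rintro ⟨w, hw⟩
    have h1 : (↑w⁻¹ * a) * b = 1 := by rw [mul_assoc, ← hw, Units.inv_mul]
    have hb : IsUnit b := aux_left_inv_isUnit τ hstate hfaithful htracial b _ h1
    have h2 : a * (b * ↑w⁻¹) = 1 := by rw [← mul_assoc, ← hw, Units.mul_inv]
    have h3 : star (b * ↑w⁻¹) * star a = 1 := by rw [← star_mul, h2, star_one]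
    have ha : IsUnit (star a) := aux_left_inv_isUnit τ hstate hfaithful htracial _ _ h3
    exact ⟨isUnit_star.mp ha, hb⟩
  · rintro ⟨ha, hb⟩
    exact ha.mul hb
end

section
/- Let (Ω, μ) be a probability space and h ∈ L¹(Ω, μ) a real-valued function. If for all t in some interval (-δ, δ) with δ > 0 one has ∫ log|1 - t·h| dμ ≥ 0 (with the integral interpreted in [-∞, ∞)), then h = 0 almost everywhere. -/
open MeasureTheory ENNReal

/-- The integral of a real function with values in `[-∞, ∞)`. -/
noncomputable def signedIntegral {Ω : Type*} [MeasurableSpace Ω] (μ : Measure Ω)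
    (f : Ω → ℝ) : EReal :=
  ((∫⁻ x, ENNReal.ofReal (f x) ∂μ : ℝ≥0∞) : EReal) -
    ((∫⁻ x, ENNReal.ofReal (-(f x)) ∂μ : ℝ≥0∞) : EReal)

section ArensHoffmanAuxSection
open Real Set intervalIntegral

namespace ArensHoffmanAux

/-- `ζ s = (1-s) log(1-s) + (1+s) log(1+s)` (recall `Real.log x = Real.log |x|`). -/
noncomputable def zee (s : ℝ) : ℝ := (1 - s) * Real.log (1 - s) + (1 + s) * Real.log (1 + s)

/-- antiderivative `G a t = ζ(t a)/t` -/
noncomputable def Gf (a t : ℝ) : ℝ := (1/t) * zee (t * a)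

/-- the kernel `ψ a t = (log|1-ta| + log|1+ta|)/t²` -/
noncomputable def psi (a t : ℝ) : ℝ := (Real.log (1 - t * a) + Real.log (1 + t * a)) / t ^ 2

lemma zee_neg (s : ℝ) : zee (-s) = zee s := by simp [zee]; ring

lemma zee_zero : zee 0 = 0 := by simp [zee]

lemma continuous_zee : Continuous zee := by
  have h1 : Continuous fun s : ℝ => (1 - s) * Real.log (1 - s) :=
    Real.continuous_mul_log.comp (by continuity)
  have h2 : Continuous fun s : ℝ => (1 + s) * Real.log (1 + s) :=
    Real.continuous_mul_log.comp (by continuity)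
  exact h1.add h2

lemma hasDerivAt_zee {s : ℝ} (h1 : 1 - s ≠ 0) (h2 : 1 + s ≠ 0) :
    HasDerivAt zee (Real.log (1 + s) - Real.log (1 - s)) s := by
  have d1 : HasDerivAt (fun s : ℝ => 1 - s) (-1) s := by
    simpa using (hasDerivAt_id s).const_sub 1
  have d2 : HasDerivAt (fun s : ℝ => 1 + s) 1 s := by
    simpa using (hasDerivAt_id s).const_add 1
  have l1 : HasDerivAt (fun s : ℝ => Real.log (1 - s)) (-(1 - s)⁻¹) s := by
    simpa [Function.comp_def] using (Real.hasDerivAt_log h1).comp s d1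
  have l2 : HasDerivAt (fun s : ℝ => Real.log (1 + s)) ((1 + s)⁻¹) s := by
    simpa [Function.comp_def] using (Real.hasDerivAt_log h2).comp s d2
  have := (d1.mul l1).add (d2.mul l2)
  refine this.congr_deriv ?_
  field_simp
  ring

lemma zee_strictMonoOn : StrictMonoOn zee (Icc (0:ℝ) 1) := by
  apply strictMonoOn_of_deriv_pos (convex_Icc 0 1) continuous_zee.continuousOn
  intro s hs
  rw [interior_Icc, mem_Ioo] at hs
  have h1 : (1:ℝ) - s ≠ 0 := by intro h; nlinarith
  have h2 : (1:ℝ) + s ≠ 0 := by intro h; nlinarith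
  rw [(hasDerivAt_zee h1 h2).deriv]
  have e1 : Real.log (1 - s) < 0 := Real.log_neg (by linarith) (by linarith)
  have e2 : 0 < Real.log (1 + s) := Real.log_pos (by linarith)
  linarith

lemma log_one_sub_eq {s : ℝ} : Real.log (1 - s) = Real.log (s - 1) := by
  rw [show (1:ℝ) - s = -(s-1) by ring, Real.log_neg_eq_log]

lemma zee_pos {s : ℝ} (hs : 0 < s) : 0 < zee s := by
  rcases lt_or_ge s 1 with h1 | h1
  · have := zee_strictMonoOn (left_mem_Icc.2 (by norm_num)) ⟨hs.le, h1.le⟩ hs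
    rwa [zee_zero] at this
  · rcases le_or_gt s 2 with hs2 | hs2
    · have t1 : 0 ≤ (1 - s) * Real.log (s - 1) := by
        have a1 : (1:ℝ) - s ≤ 0 := by linarith
        have a2 : Real.log (s - 1) ≤ 0 := Real.log_nonpos (by linarith) (by linarith)
        nlinarith
      have t2 : 0 < (1 + s) * Real.log (1 + s) :=
        mul_pos (by linarith) (Real.log_pos (by linarith))
      rw [zee, log_one_sub_eq]; linarith
    · have l1 : Real.log (s - 1) < Real.log (s + 1) := Real.log_lt_log (by linarith) (by linarith)
      have l0 : 0 < Real.log (s - 1) := Real.log_pos (by linarith)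
      rw [zee, log_one_sub_eq, show (1:ℝ) + s = s + 1 from add_comm 1 s]
      have : (s - 1) * Real.log (s - 1) < (s + 1) * Real.log (s + 1) := by nlinarith
      nlinarith [this]

lemma zee_nonneg (s : ℝ) : 0 ≤ zee s := by
  rcases lt_trichotomy s 0 with h | h | h
  · rw [← zee_neg]; exact (zee_pos (by linarith)).le
  · simp [h, zee_zero]
  · exact (zee_pos h).le

lemma zee_pos_of_ne {s : ℝ} (hs : s ≠ 0) : 0 < zee s := by
  rcases lt_or_gt_of_ne hs with h | h
  · rw [← zee_neg]; exact zee_pos (by linarith)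
  · exact zee_pos h

lemma sqrt_two_le : Real.sqrt 2 ≤ 3/2 := by
  nlinarith [Real.sq_sqrt (by norm_num : (0:ℝ) ≤ 2), Real.sqrt_nonneg 2]

lemma zee_le_five {s : ℝ} (h0 : 0 ≤ s) (h2 : s ≤ Real.sqrt 2) : zee s ≤ 5 := by
  have hs2 : s ≤ 3/2 := h2.trans sqrt_two_le
  have t1 : (1 + s) * Real.log (1 + s) ≤ 4 := by
    have hl : Real.log (1 + s) ≤ s := by
      have := Real.log_le_sub_one_of_pos (show (0:ℝ) < 1 + s by linarith)
      linarith
    nlinarith [Real.log_nonneg (show (1:ℝ) ≤ 1 + s by linarith)]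
  have t2 : (1 - s) * Real.log (1 - s) ≤ 1 := by
    rcases le_or_gt s 1 with h | h
    · have := Real.log_nonpos (show (0:ℝ) ≤ 1 - s by linarith) (by linarith)
      nlinarith
    · rw [log_one_sub_eq]
      have hu : (0:ℝ) < s - 1 := by linarith
      have := Real.log_le_sub_one_of_pos (show (0:ℝ) < (s-1)⁻¹ by positivity)
      rw [Real.log_inv] at this
      have h3 : -Real.log (s-1) ≤ (s-1)⁻¹ - 1 := this
      have h4 : (1 - s) * Real.log (s - 1) = (s-1) * (-Real.log (s-1)) := by ring
      rw [h4]
      have : (s-1) * (-Real.log (s-1)) ≤ (s-1) * ((s-1)⁻¹ - 1) :=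
        mul_le_mul_of_nonneg_left h3 hu.le
      have h5 : (s-1) * ((s-1)⁻¹ - 1) = 1 - (s-1)*1 - 0 := by field_simp; ring
      nlinarith [this]
  simp only [zee]; linarith


lemma Gf_zero (a : ℝ) : Gf a 0 = 0 := by simp [Gf, zee_zero]

lemma hasDerivAt_Gf {a t : ℝ} (ht : 0 < t) (h1 : 1 - t * a ≠ 0) (h2 : 1 + t * a ≠ 0) :
    HasDerivAt (Gf a) (-(psi a t)) t := by
  have hinner : HasDerivAt (fun t : ℝ => t * a) a t := by
    simpa using (hasDerivAt_id t).mul_const a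
  have hz : HasDerivAt (fun t : ℝ => zee (t * a))
      ((Real.log (1 + t * a) - Real.log (1 - t * a)) * a) t :=
    HasDerivAt.comp (h₂ := zee) t (hasDerivAt_zee h1 h2) hinner
  have hu : HasDerivAt (fun t : ℝ => 1 / t) (-(t ^ 2)⁻¹) t := by
    simpa [one_div] using hasDerivAt_inv ht.ne'
  have := hu.mul hz
  refine this.congr_deriv ?_
  unfold psi zee
  field_simp
  ring

lemma continuousOn_Gf (a : ℝ) : ContinuousOn (Gf a) (Ici 0) := by
  intro t ht
  rcases eq_or_lt_of_le (mem_Ici.1 ht) with rfl | htpos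
  · -- continuity at 0
    have hz : HasDerivAt (fun t : ℝ => zee (t * a)) 0 (0:ℝ) := by
      have hinner : HasDerivAt (fun t : ℝ => t * a) a (0:ℝ) := by
        simpa using (hasDerivAt_id (0:ℝ)).mul_const a
      have := (hasDerivAt_zee (s := (0:ℝ) * a) (by simp) (by simp)).comp (0:ℝ) hinner
      simpa [Function.comp_def] using this
    have hslope := hasDerivAt_iff_tendsto_slope.1 hz
    have heq : ∀ x : ℝ, x ≠ 0 → slope (fun t : ℝ => zee (t * a)) 0 x = Gf a x := by
      intro x hx
      simp [slope, Gf, zee_zero, div_eq_inv_mul]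
    have h2 : Filter.Tendsto (Gf a) (nhdsWithin 0 {(0:ℝ)}ᶜ) (nhds 0) := by
      refine hslope.congr' ?_
      filter_upwards [self_mem_nhdsWithin] with x hx using heq x hx
    have h3 : Filter.Tendsto (Gf a) (nhds 0) (nhds 0) := by
      have hp : Filter.Tendsto (Gf a) (pure (0:ℝ)) (nhds 0) := by
        simpa [Gf_zero] using tendsto_pure_nhds (Gf a) 0
      have := h2.sup hp
      rwa [nhdsNE_sup_pure] at this
    have : ContinuousAt (Gf a) 0 := by simpa [ContinuousAt, Gf_zero] using h3
    exact this.continuousWithinAt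
  · refine ContinuousAt.continuousWithinAt ?_
    have h1 : ContinuousAt (fun t : ℝ => 1 / t) t :=
      ContinuousAt.div continuousAt_const continuousAt_id htpos.ne'
    have h2 : ContinuousAt (fun t : ℝ => zee (t * a)) t :=
      continuous_zee.continuousAt.comp (continuousAt_id.mul continuousAt_const)
    exact h1.mul h2


lemma psi_nonpos {a t : ℝ} (ht : 0 < t) (ha : 0 < a) (hlt : (t*a)^2 ≤ 2) (hne : t * a ≠ 1) :
    psi a t ≤ 0 := by
  have h2 : (0:ℝ) < 1 + t * a := by nlinarith
  have hsum : Real.log (1 - t * a) + Real.log (1 + t * a) ≤ 0 := by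
    rcases lt_or_gt_of_ne hne with h1 | h1
    · have h1' : (0:ℝ) < 1 - t * a := by linarith
      rw [← Real.log_mul h1'.ne' h2.ne']
      apply Real.log_nonpos (by nlinarith) (by nlinarith)
    · rw [log_one_sub_eq]
      have h1' : (0:ℝ) < t * a - 1 := by linarith
      rw [← Real.log_mul h1'.ne' h2.ne']
      apply Real.log_nonpos (by nlinarith) (by nlinarith)
  unfold psi
  exact div_nonpos_of_nonpos_of_nonneg hsum (sq_nonneg t)

lemma psi_nonneg {a t : ℝ} (ht : 0 < t) (ha : 0 < a) (hge : 2 ≤ (t*a)^2) :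
    0 ≤ psi a t := by
  have hta : 1 < t * a := by nlinarith [mul_pos ht ha]
  have h2 : (0:ℝ) < 1 + t * a := by linarith
  have h1' : (0:ℝ) < t * a - 1 := by linarith
  have hsum : 0 ≤ Real.log (1 - t * a) + Real.log (1 + t * a) := by
    rw [log_one_sub_eq, ← Real.log_mul h1'.ne' h2.ne']
    apply Real.log_nonneg (by nlinarith)
  unfold psi
  exact div_nonneg hsum (sq_nonneg t)

lemma piece {a p q : ℝ} (ha : 0 < a) (hp : 0 ≤ p) (hpq : p < q)
    (hne : ∀ t ∈ Ioo p q, 1 - t * a ≠ 0)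
    (hsign : (∀ t ∈ Ioo p q, psi a t ≤ 0) ∨ (∀ t ∈ Ioo p q, 0 ≤ psi a t)) :
    IntervalIntegrable (psi a) volume p q ∧ ∫ t in p..q, psi a t = Gf a p - Gf a q := by
  have hder : ∀ t ∈ Ioo p q, HasDerivAt (Gf a) (-(psi a t)) t := by
    intro t htm
    have ht : 0 < t := lt_of_le_of_lt hp htm.1
    exact hasDerivAt_Gf ht (hne t htm) (by nlinarith [mul_pos ht ha])
  have hcont : ContinuousOn (Gf a) (Icc p q) :=
    (continuousOn_Gf a).mono (fun x hx => le_trans hp hx.1)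
  have hInt : IntervalIntegrable (psi a) volume p q := by
    rw [intervalIntegrable_iff_integrableOn_Ioc_of_le hpq.le]
    rcases hsign with hs | hs
    · have := integrableOn_deriv_of_nonneg hcont hder
        (fun t htm => neg_nonneg.2 (hs t htm))
      exact this.neg.congr (Filter.Eventually.of_forall fun x => by simp)
    · have hder' : ∀ t ∈ Ioo p q, HasDerivAt (fun t => -(Gf a t)) (psi a t) t := by
        intro t htm
        have := (hder t htm).neg; rwa [neg_neg] at this
      exact integrableOn_deriv_of_nonneg hcont.neg hder' hs
  refine ⟨hInt, ?_⟩
  have := integral_eq_sub_of_hasDeriv_right_of_le hpq.le hcont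
    (fun t htm => (hder t htm).hasDerivWithinAt) hInt.neg
  rw [intervalIntegral.integral_neg] at this
  linarith [this]

lemma one_lt_sqrt_two : (1:ℝ) < Real.sqrt 2 := by
  nlinarith [Real.sq_sqrt (show (0:ℝ) ≤ 2 by norm_num), Real.sqrt_nonneg 2]

lemma ae_ne_vol (c : ℝ) : ∀ᵐ (t : ℝ) ∂volume, t ≠ c := by
  have h : volume ({c} : Set ℝ) = 0 := Real.volume_singleton
  rw [MeasureTheory.ae_iff]
  simpa using h

lemma core_pos {a δ : ℝ} (ha : 0 < a) (hδ : 0 < δ) :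
    IntervalIntegrable (psi a) volume 0 δ ∧
    (∫ t in (0:ℝ)..δ, psi a t) = -((1/δ) * zee (δ * a)) ∧
    (∫ t in (0:ℝ)..δ, |psi a t|) ≤ 8 * |a| + 5 / δ := by
  have hsq : Real.sqrt 2 ^ 2 = 2 := Real.sq_sqrt (by norm_num)
  have hs0 : (0:ℝ) ≤ Real.sqrt 2 := Real.sqrt_nonneg 2
  set T0 : ℝ := 1/a with hT0def
  set T1 : ℝ := Real.sqrt 2 / a with hT1def
  have hT0pos : 0 < T0 := by positivity
  have hT01 : T0 < T1 := by
    rw [hT0def, hT1def, div_lt_div_iff_of_pos_right ha]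
    exact one_lt_sqrt_two
  have hmul_le_s : ∀ t : ℝ, t ≤ T1 → t * a ≤ Real.sqrt 2 := fun t h => by
    rw [hT1def] at h
    calc t * a ≤ (Real.sqrt 2 / a) * a := mul_le_mul_of_nonneg_right h ha.le
    _ = Real.sqrt 2 := by field_simp
  have hs_le_mul : ∀ t : ℝ, T1 ≤ t → Real.sqrt 2 ≤ t * a := fun t h => by
    rw [hT1def] at h
    calc Real.sqrt 2 = (Real.sqrt 2 / a) * a := by field_simp
    _ ≤ t * a := mul_le_mul_of_nonneg_right h ha.le
  -- sign knowledge on (0, T1] away from T0, and on [T1, ∞)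
  have signN : ∀ t : ℝ, 0 < t → t ≤ T1 → t ≠ T0 → psi a t ≤ 0 := by
    intro t ht hle hne
    have h2 : (t * a)^2 ≤ 2 := by nlinarith [hmul_le_s t hle, mul_pos ht ha]
    have h1 : t * a ≠ 1 := by
      intro hc
      apply hne
      rw [hT0def]
      field_simp
      linarith [hc]
    exact psi_nonpos ht ha h2 h1
  have signP : ∀ t : ℝ, T1 ≤ t → 0 ≤ psi a t := by
    intro t ht
    have := hs_le_mul t ht
    exact psi_nonneg (lt_of_lt_of_le (hT0pos.trans hT01) ht) ha (by nlinarith)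
  have hneN : ∀ t : ℝ, 0 < t → t ≠ T0 → 1 - t * a ≠ 0 := by
    intro t ht hne hc
    apply hne
    rw [hT0def]
    field_simp
    nlinarith [hc]
  -- FTC on a subinterval of (0, T1] (allowing interior T0) :
  have ftcN : ∀ q : ℝ, 0 < q → q ≤ T1 →
      IntervalIntegrable (psi a) volume 0 q ∧ (∫ t in (0:ℝ)..q, psi a t) = -(Gf a q) := by
    intro q hq hqT1
    rcases le_or_gt q T0 with hqT0 | hqT0
    · obtain ⟨hI, hv⟩ := piece ha le_rfl hq
        (fun t htm => hneN t htm.1 (ne_of_lt (lt_of_lt_of_le htm.2 hqT0)))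
        (Or.inl fun t htm => signN t htm.1 (le_trans htm.2.le hqT1)
          (ne_of_lt (lt_of_lt_of_le htm.2 hqT0)))
      exact ⟨hI, by rw [hv, Gf_zero, zero_sub]⟩
    · obtain ⟨hIA, hvA⟩ := piece ha le_rfl hT0pos
        (fun t htm => hneN t htm.1 (ne_of_lt htm.2))
        (Or.inl fun t htm => signN t htm.1 (le_trans htm.2.le (le_trans hqT0.le hqT1))
          (ne_of_lt htm.2))
      obtain ⟨hIB, hvB⟩ := piece ha hT0pos.le hqT0
        (fun t htm => hneN t (hT0pos.trans htm.1) (ne_of_gt htm.1))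
        (Or.inl fun t htm => signN t (hT0pos.trans htm.1) (le_trans htm.2.le hqT1)
          (ne_of_gt htm.1))
      refine ⟨hIA.trans hIB, ?_⟩
      rw [← intervalIntegral.integral_add_adjacent_intervals hIA hIB, hvA, hvB, Gf_zero]
      ring
  -- |psi| = -psi a.e. on (0, q] for q ≤ T1
  have absN : ∀ q : ℝ, 0 < q → q ≤ T1 →
      (∫ t in (0:ℝ)..q, |psi a t|) = -∫ t in (0:ℝ)..q, psi a t := by
    intro q hq hqT1
    rw [← intervalIntegral.integral_neg]
    apply intervalIntegral.integral_congr_ae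
    filter_upwards [ae_ne_vol T0] with t htne htm
    rw [uIoc_of_le hq.le] at htm
    exact abs_of_nonpos (signN t htm.1 (le_trans htm.2 hqT1) htne)
  rcases le_or_gt δ T1 with hc | hc
  · -- Case δ ≤ T1
    obtain ⟨hI, hval⟩ := ftcN δ hδ hc
    refine ⟨hI, by rw [hval]; simp [Gf], ?_⟩
    rw [absN δ hδ hc, hval, neg_neg]
    have h1 : zee (δ*a) ≤ 5 := zee_le_five (by positivity) (hmul_le_s δ hc)
    have h2 : (1/δ) * zee (δ*a) ≤ (1/δ) * 5 := mul_le_mul_of_nonneg_left h1 (by positivity)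
    have h3 : Gf a δ = (1/δ) * zee (δ*a) := rfl
    rw [h3]
    have h4 : (1/δ) * 5 = 5/δ := by ring
    nlinarith [abs_nonneg a]
  · -- Case T1 < δ
    have hT1pos : 0 < T1 := hT0pos.trans hT01
    obtain ⟨hIN, hvN⟩ := ftcN T1 hT1pos le_rfl
    obtain ⟨hIP, hvP⟩ := piece ha hT1pos.le hc
      (fun t htm => hneN t (hT1pos.trans htm.1) (ne_of_gt (hT01.trans htm.1)))
      (Or.inr fun t htm => signP t htm.1.le)
    have hI : IntervalIntegrable (psi a) volume 0 δ := hIN.trans hIP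
    have hval : (∫ t in (0:ℝ)..δ, psi a t) = -(Gf a δ) := by
      rw [← intervalIntegral.integral_add_adjacent_intervals hIN hIP, hvN, hvP]
      ring
    refine ⟨hI, by rw [hval]; simp [Gf], ?_⟩
    have habs : (∫ t in (0:ℝ)..δ, |psi a t|)
        = (∫ t in (0:ℝ)..T1, |psi a t|) + ∫ t in T1..δ, |psi a t| :=
      (intervalIntegral.integral_add_adjacent_intervals hIN.abs hIP.abs).symm
    have habsP : (∫ t in T1..δ, |psi a t|) = ∫ t in T1..δ, psi a t := by
      apply intervalIntegral.integral_congr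
      intro t htm
      rw [uIcc_of_le hc.le] at htm
      exact abs_of_nonneg (signP t htm.1)
    have hGfT1 : Gf a T1 = (a / Real.sqrt 2) * zee (Real.sqrt 2) := by
      rw [Gf, hT1def]
      have e1 : Real.sqrt 2 / a * a = Real.sqrt 2 := by field_simp
      rw [e1, one_div_div]
    have hb1 : Gf a T1 ≤ (a / Real.sqrt 2) * 5 := by
      rw [hGfT1]
      exact mul_le_mul_of_nonneg_left (zee_le_five hs0 le_rfl) (by positivity)
    have hb2 : (a / Real.sqrt 2) * 5 ≤ 4 * a := by
      rw [div_mul_eq_mul_div, div_le_iff₀ (by positivity : (0:ℝ) < Real.sqrt 2)]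
      nlinarith
    have hGfδ : 0 ≤ Gf a δ := mul_nonneg (by positivity) (zee_nonneg _)
    rw [habs, habsP, absN T1 hT1pos le_rfl, hvN, hvP, neg_neg]
    have h5 : (0:ℝ) ≤ 5 / δ := by positivity
    have ha' : |a| = a := abs_of_pos ha
    nlinarith
lemma psi_neg (a : ℝ) : psi (-a) = psi a := by
  funext t
  unfold psi
  ring_nf

lemma zee_neg' (s : ℝ) : zee (-s) = zee s := by unfold zee; ring_nf

lemma core (a : ℝ) {δ : ℝ} (hδ : 0 < δ) :
    IntegrableOn (psi a) (Ioo 0 δ) volume ∧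
    (∫ t in Ioo (0:ℝ) δ, psi a t) = -((1/δ) * zee (δ * a)) ∧
    (∫ t in Ioo (0:ℝ) δ, |psi a t|) ≤ 8 * |a| + 5 / δ := by
  have conv : ∀ f : ℝ → ℝ, (∫ t in (0:ℝ)..δ, f t) = ∫ t in Ioo (0:ℝ) δ, f t := fun f => by
    rw [intervalIntegral.integral_of_le hδ.le, integral_Ioc_eq_integral_Ioo]
  have main : ∀ b : ℝ, 0 < b → IntegrableOn (psi b) (Ioo 0 δ) volume ∧
      (∫ t in Ioo (0:ℝ) δ, psi b t) = -((1/δ) * zee (δ * b)) ∧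
      (∫ t in Ioo (0:ℝ) δ, |psi b t|) ≤ 8 * |b| + 5 / δ := by
    intro b hb
    obtain ⟨hI, hval, habs⟩ := core_pos hb hδ
    exact ⟨(intervalIntegrable_iff_integrableOn_Ioo_of_le hδ.le).1 hI,
      by rw [← conv]; exact hval, by rw [← conv]; exact habs⟩
  rcases lt_trichotomy a 0 with h | h | h
  · obtain ⟨hI, hval, habs⟩ := main (-a) (by linarith)
    rw [psi_neg] at hI hval habs
    refine ⟨hI, ?_, ?_⟩
    · rw [hval, show δ * -a = -(δ * a) by ring, zee_neg']
    · rwa [abs_neg] at habs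
  · subst h
    have hz : psi 0 = fun _ => (0:ℝ) := by
      funext t; simp [psi]
    rw [hz]
    simp [zee_zero]
    positivity
  · exact main a h


/-- `log (1 - y) ≤ |y|`. -/
lemma log_le_abs (y : ℝ) : Real.log (1 - y) ≤ |y| := by
  rcases eq_or_ne (1 - y) 0 with h | h
  · rw [h, Real.log_zero]
    exact abs_nonneg y
  · rw [← Real.log_abs]
    have h1 : 0 < |1 - y| := abs_pos.2 h
    have h2 := Real.log_le_sub_one_of_pos h1
    have h3 : |1 - y| ≤ 1 + |y| := by
      calc |1 - y| = |1 + -y| := by ring_nf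
      _ ≤ |1| + |-y| := abs_add_le 1 (-y)
      _ = 1 + |y| := by simp
    linarith


end ArensHoffmanAux

end ArensHoffmanAuxSection

open ArensHoffmanAux Set

/-- The Arens–Hoffman lemma: if `h` is integrable on a probability space and
`∫ log |1 - t h| dμ ≥ 0` (in `[-∞, ∞)`) for all `t` in an interval `(-δ, δ)` with `δ > 0`,
then `h = 0` almost everywhere. -/
theorem ae_eq_zero_of_signedIntegral_log_nonneg
    {Ω : Type*} [MeasurableSpace Ω] (μ : Measure Ω) [IsProbabilityMeasure μ]
    (h : Ω → ℝ) (hint : Integrable h μ) (δ : ℝ) (hδ : 0 < δ)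
    (H : ∀ t ∈ Set.Ioo (-δ) δ,
      (0 : EReal) ≤ signedIntegral μ (fun x => Real.log |1 - t * h x|)) :
    h =ᵐ[μ] fun _ => 0 := by
  -- replace h by a measurable representative
  have hmeas : AEMeasurable h μ := hint.aestronglyMeasurable.aemeasurable
  set h' : Ω → ℝ := hmeas.mk h with hh'def
  have hh' : h =ᵐ[μ] h' := hmeas.ae_eq_mk
  have h'meas : Measurable h' := hmeas.measurable_mk
  have hint' : Integrable h' μ := hint.congr hh'
  -- finiteness of ∫⁻ |h'|
  have hfin : (∫⁻ x, ENNReal.ofReal |h' x| ∂μ) < ⊤ := by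
    have : (fun x => ENNReal.ofReal |h' x|) = fun x => (‖h' x‖₊ : ℝ≥0∞) := by
      funext x
      rw [← Real.norm_eq_abs, ofReal_norm, enorm_eq_nnnorm]
    rw [this]
    exact hint'.2
  -- Step A : for each t ∈ (-δ, δ), log (1 - t h') is integrable with nonneg integral
  have key : ∀ t ∈ Set.Ioo (-δ) δ,
      Integrable (fun x => Real.log (1 - t * h' x)) μ ∧
      0 ≤ ∫ x, Real.log (1 - t * h' x) ∂μ := by
    intro t ht
    set L : Ω → ℝ := fun x => Real.log (1 - t * h' x) with hLdef
    have hLmeas : Measurable L :=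
      Real.measurable_log.comp (measurable_const.sub (h'meas.const_mul t))
    set A := ∫⁻ x, ENNReal.ofReal (L x) ∂μ with hAdef
    set B := ∫⁻ x, ENNReal.ofReal (-(L x)) ∂μ with hBdef
    have hA : A ≠ ⊤ := by
      have hle : A ≤ ENNReal.ofReal |t| * ∫⁻ x, ENNReal.ofReal |h' x| ∂μ := by
        rw [← lintegral_const_mul _ (h'meas.abs.ennreal_ofReal)]
        apply lintegral_mono
        intro x
        dsimp only
        rw [← ENNReal.ofReal_mul (abs_nonneg t)]
        apply ENNReal.ofReal_le_ofReal
        calc L x ≤ |t * h' x| := log_le_abs (t * h' x)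
        _ = |t| * |h' x| := abs_mul _ _
      exact (lt_of_le_of_lt hle (ENNReal.mul_lt_top ENNReal.ofReal_lt_top hfin)).ne
    have hsig := H t ht
    have heq1 : (∫⁻ x, ENNReal.ofReal ((fun x => Real.log |1 - t * h x|) x) ∂μ) = A := by
      apply lintegral_congr_ae
      filter_upwards [hh'] with x hx
      rw [hLdef]
      simp only
      rw [hx, Real.log_abs]
    have heq2 : (∫⁻ x, ENNReal.ofReal (-((fun x => Real.log |1 - t * h x|) x)) ∂μ) = B := by
      apply lintegral_congr_ae
      filter_upwards [hh'] with x hx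
      rw [hLdef]
      simp only
      rw [hx, Real.log_abs]
    rw [signedIntegral, heq1, heq2] at hsig
    have hBne : B ≠ ⊤ := by
      intro hB
      rw [hB, EReal.coe_ennreal_top, EReal.sub_top] at hsig
      exact EReal.bot_lt_zero.not_ge hsig
    have hBle : B ≤ A := by
      have h1 := (EReal.le_sub_iff_add_le (Or.inl (EReal.coe_ennreal_ne_bot B))
        (Or.inl (fun hc => hBne (EReal.coe_ennreal_eq_top_iff.1 hc)))).1 hsig
      rw [zero_add] at h1
      exact EReal.coe_ennreal_le_coe_ennreal_iff.1 h1
    have hLint : Integrable L μ := by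
      refine ⟨hLmeas.aestronglyMeasurable, ?_⟩
      rw [hasFiniteIntegral_iff_norm]
      have hbound : ∀ x, ENNReal.ofReal ‖L x‖ ≤ ENNReal.ofReal (L x) + ENNReal.ofReal (-(L x)) := by
        intro x
        rcases le_total 0 (L x) with hx | hx
        · rw [Real.norm_eq_abs, abs_of_nonneg hx]; exact le_self_add
        · rw [Real.norm_eq_abs, abs_of_nonpos hx]; exact le_add_self
      calc (∫⁻ x, ENNReal.ofReal ‖L x‖ ∂μ)
          ≤ ∫⁻ x, (ENNReal.ofReal (L x) + ENNReal.ofReal (-(L x))) ∂μ := lintegral_mono hbound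
        _ = A + B := lintegral_add_left (hLmeas.ennreal_ofReal) _
        _ < ⊤ := ENNReal.add_lt_top.2 ⟨hA.lt_top, hBne.lt_top⟩
    refine ⟨hLint, ?_⟩
    rw [integral_eq_lintegral_pos_part_sub_lintegral_neg_part hLint]
    exact sub_nonneg.2 ((ENNReal.toReal_le_toReal hBne hA).2 hBle)
  -- Step B : product integrability of (x, t) ↦ psi (h' x) t
  set ρ : Measure ℝ := volume.restrict (Set.Ioo 0 δ) with hρdef
  set F : Ω × ℝ → ℝ := fun p => psi (h' p.1) p.2 with hFdef
  have hFmeas : Measurable F := by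
    have h1 : Measurable fun p : Ω × ℝ => Real.log (1 - p.2 * h' p.1) :=
      Real.measurable_log.comp (measurable_const.sub (measurable_snd.mul (h'meas.comp measurable_fst)))
    have h2 : Measurable fun p : Ω × ℝ => Real.log (1 + p.2 * h' p.1) :=
      Real.measurable_log.comp (measurable_const.add (measurable_snd.mul (h'meas.comp measurable_fst)))
    exact (h1.add h2).div ((measurable_snd.pow measurable_const))
  have hFint : Integrable F (μ.prod ρ) := by
    refine ⟨hFmeas.aestronglyMeasurable, ?_⟩
    rw [hasFiniteIntegral_def]
    rw [lintegral_prod _ hFmeas.enorm.aemeasurable]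
    have hinner : ∀ x : Ω, (∫⁻ t, (‖F (x, t)‖₊ : ℝ≥0∞) ∂ρ) ≤ ENNReal.ofReal (8 * |h' x| + 5 / δ) := by
      intro x
      obtain ⟨hIx, -, habsx⟩ := core (h' x) hδ
      have hIx' : Integrable (fun t => psi (h' x) t) ρ := hIx
      rw [show (∫⁻ t, (‖F (x, t)‖₊ : ℝ≥0∞) ∂ρ) = ∫⁻ t, ‖psi (h' x) t‖ₑ ∂ρ from rfl, ← ofReal_integral_norm_eq_lintegral_enorm hIx']
      apply ENNReal.ofReal_le_ofReal
      calc (∫ t, ‖psi (h' x) t‖ ∂ρ) = ∫ t in Set.Ioo (0:ℝ) δ, |psi (h' x) t| := by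
            simp only [Real.norm_eq_abs, hρdef]
        _ ≤ 8 * |h' x| + 5 / δ := habsx
    calc (∫⁻ x, (∫⁻ t, (‖F (x, t)‖₊ : ℝ≥0∞) ∂ρ) ∂μ)
        ≤ ∫⁻ x, ENNReal.ofReal (8 * |h' x| + 5 / δ) ∂μ := lintegral_mono hinner
      _ ≤ ∫⁻ x, (ENNReal.ofReal (8 * |h' x|) + ENNReal.ofReal (5 / δ)) ∂μ :=
          lintegral_mono fun x => ENNReal.ofReal_add_le
      _ = (∫⁻ x, ENNReal.ofReal (8 * |h' x|) ∂μ) + ENNReal.ofReal (5 / δ) * μ Set.univ := by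
          rw [lintegral_add_right _ measurable_const, lintegral_const]
      _ < ⊤ := by
          apply ENNReal.add_lt_top.2
          constructor
          · have : ∀ x, ENNReal.ofReal (8 * |h' x|) = ENNReal.ofReal 8 * ENNReal.ofReal |h' x| :=
              fun x => ENNReal.ofReal_mul (by norm_num)
            rw [lintegral_congr this, lintegral_const_mul _ (h'meas.abs.ennreal_ofReal)]
            exact ENNReal.mul_lt_top ENNReal.ofReal_lt_top hfin
          · exact ENNReal.mul_lt_top ENNReal.ofReal_lt_top (measure_lt_top μ _)
  -- Step C : Fubini
  have hL : (∫ p, F p ∂(μ.prod ρ)) = ∫ x, -((1/δ) * zee (δ * h' x)) ∂μ := by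
    rw [integral_prod F hFint]
    apply integral_congr_ae
    apply Filter.Eventually.of_forall
    intro x
    exact (core (h' x) hδ).2.1
  have hR : 0 ≤ ∫ p, F p ∂(μ.prod ρ) := by
    rw [integral_prod_symm F hFint]
    apply integral_nonneg_of_ae
    have hsub : ∀ᵐ (t:ℝ) ∂ρ, t ∈ Set.Ioo (0:ℝ) δ := by
      rw [hρdef]; exact ae_restrict_mem measurableSet_Ioo
    filter_upwards [hsub] with t htm
    simp only [Pi.zero_apply]
    have ht1 : t ∈ Set.Ioo (-δ) δ := ⟨lt_trans (neg_lt_zero.2 hδ) htm.1, htm.2⟩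
    have ht2 : -t ∈ Set.Ioo (-δ) δ := ⟨by simpa using htm.2, lt_trans (neg_lt_zero.2 htm.1) hδ⟩
    obtain ⟨hI1, hv1⟩ := key t ht1
    obtain ⟨hI2', hv2'⟩ := key (-t) ht2
    have hfun : (fun x => Real.log (1 - -t * h' x)) = fun x => Real.log (1 + t * h' x) := by
      funext x; ring_nf
    rw [hfun] at hI2' hv2'
    have heq : (fun x => F (x, t)) = fun x =>
        (Real.log (1 - t * h' x) + Real.log (1 + t * h' x)) / t ^ 2 := rfl
    rw [heq]
    have : (∫ x, (Real.log (1 - t * h' x) + Real.log (1 + t * h' x)) / t ^ 2 ∂μ)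
        = (∫ x, (Real.log (1 - t * h' x) + Real.log (1 + t * h' x)) ∂μ) / t ^ 2 :=
      integral_div _ _
    rw [this, integral_add hI1 hI2']
    positivity
  -- conclude
  have hneg : (∫ x, zee (δ * h' x) ∂μ) ≤ 0 := by
    have h1 : 0 ≤ ∫ x, -((1/δ) * zee (δ * h' x)) ∂μ := hL ▸ hR
    rw [integral_neg, integral_const_mul] at h1
    have h2 : (1/δ) * ∫ x, zee (δ * h' x) ∂μ ≤ 0 := by linarith
    nlinarith [one_div_pos.2 hδ, h2]
  have hzint : Integrable (fun x => zee (δ * h' x)) μ := by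
    have h1 : Integrable (fun x => ∫ t, F (x, t) ∂ρ) μ := hFint.integral_prod_left
    have h2 : (fun x => ∫ t, F (x, t) ∂ρ) = fun x => -((1/δ) * zee (δ * h' x)) := by
      funext x
      exact (core (h' x) hδ).2.1
    rw [h2] at h1
    have h3 := (h1.neg.const_mul δ)
    apply h3.congr
    apply Filter.Eventually.of_forall
    intro x
    simp only [Pi.neg_apply, neg_neg]
    field_simp
  have hz0 : (fun x => zee (δ * h' x)) =ᵐ[μ] 0 := by
    have hge : (0:ℝ) ≤ ∫ x, zee (δ * h' x) ∂μ := integral_nonneg fun x => zee_nonneg _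
    exact (integral_eq_zero_iff_of_nonneg (fun x => zee_nonneg _) hzint).1 (le_antisymm hneg hge)
  have hfinal : h' =ᵐ[μ] fun _ => 0 := by
    filter_upwards [hz0] with x hx
    simp only [Pi.zero_apply] at hx
    by_contra hne
    have hδne : δ * h' x ≠ 0 := mul_ne_zero hδ.ne' hne
    exact (zee_pos_of_ne hδne).ne' hx
  exact hh'.trans hfinal
end

section
/- Let H be a Hilbert space, u ∈ B(H) an isometry, K ⊆ H a closed invariant subspace (uK ⊆ K), and W = K ⊖ uK. Then K decomposes as the orthogonal direct sum K = (closure of the span of {uⁿW : n ≥ 0}) ⊕ K₂, where K₂ = ∩_{n≥0} uⁿK, and u restricts to a unitary (surjective isometry) on K₂. -/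
open scoped InnerProductSpace

/-- The Wold decomposition: if `u` is an isometry on a Hilbert space and `K` a closed
invariant subspace with wandering subspace `W = K ⊖ uK`, then `K` is the orthogonal direct
sum of the closed span of `{uⁿ W : n ≥ 0}` and `K₂ = ∩ₙ uⁿ K`, and `u` restricts to a
unitary (surjective isometry) on `K₂`. -/
theorem wold_decomposition
    {H : Type*} [NormedAddCommGroup H] [InnerProductSpace ℂ H] [CompleteSpace H]
    (u : H →L[ℂ] H) (hu : ∀ x : H, ‖u x‖ = ‖x‖)
    (K : Submodule ℂ H) (hK : IsClosed (K : Set H))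
    (hinv : ∀ x ∈ K, u x ∈ K)
    (W K₁ K₂ : Set H)
    (hW : W = {x : H | x ∈ K ∧ ∀ y ∈ K, ⟪x, u y⟫_ℂ = 0})
    (hK₁ : K₁ = closure (Submodule.span ℂ (⋃ n : ℕ, (u ^ n) '' W) : Set H))
    (hK₂ : K₂ = ⋂ n : ℕ, (u ^ n) '' (K : Set H)) :
    (∀ a ∈ K₁, ∀ b ∈ K₂, ⟪a, b⟫_ℂ = 0) ∧
    (∀ x ∈ K, ∃ a ∈ K₁, ∃ b ∈ K₂, x = a + b) ∧
    (K₁ ⊆ K) ∧ (K₂ ⊆ K) ∧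
    u '' K₂ = K₂ := by
  -- Basic facts about the isometry
  have hinner : ∀ x y : H, ⟪u x, u y⟫_ℂ = ⟪x, y⟫_ℂ := fun x y =>
    (⟨u.toLinearMap, hu⟩ : H →ₗᵢ[ℂ] H).inner_map_map x y
  have hpow1 : ∀ (n : ℕ) (x : H), (u ^ (n+1)) x = u ((u ^ n) x) := by
    intro n x; rw [pow_succ']; rfl
  have hpow2 : ∀ (n : ℕ) (x : H), (u ^ (n+1)) x = (u ^ n) (u x) := by
    intro n x; rw [pow_succ]; rfl
  have hinner_pow : ∀ (n : ℕ) (x y : H), ⟪(u ^ n) x, (u ^ n) y⟫_ℂ = ⟪x, y⟫_ℂ := by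
    intro n
    induction n with
    | zero => intro x y; simp
    | succ n ih => intro x y; rw [hpow1, hpow1, hinner, ih]
  have huinj : Function.Injective u := by
    intro x y hxy
    have : ‖x - y‖ = 0 := by rw [← hu, map_sub, hxy, sub_self, norm_zero]
    simpa [sub_eq_zero] using this
  have hpow_mem : ∀ (n : ℕ), ∀ x ∈ K, (u ^ n) x ∈ K := by
    intro n
    induction n with
    | zero => intro x hx; simpa using hx
    | succ n ih => intro x hx; rw [hpow1]; exact hinv _ (ih x hx)
  have hWK : W ⊆ (K : Set H) := by rw [hW]; intro x hx; exact hx.1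
  -- K₁ ⊆ K
  have hspanK : (Submodule.span ℂ (⋃ n : ℕ, (u ^ n) '' W) : Set H) ⊆ (K : Set H) := by
    have : Submodule.span ℂ (⋃ n : ℕ, (u ^ n) '' W) ≤ K := by
      apply Submodule.span_le.mpr
      rintro z hz
      obtain ⟨n, w, hw, rfl⟩ := Set.mem_iUnion.mp hz
      exact hpow_mem n w (hWK hw)
    exact this
  have hK1K : K₁ ⊆ (K : Set H) := by
    rw [hK₁]; exact closure_minimal hspanK hK
  have hK2K : K₂ ⊆ (K : Set H) := by
    rw [hK₂]
    intro x hx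
    have := Set.mem_iInter.mp hx 0
    simpa using this
  -- membership of b ∈ K₂ unfolded
  have hK2mem : ∀ b, b ∈ K₂ ↔ ∀ n : ℕ, ∃ c ∈ K, (u ^ n) c = b := by
    intro b
    rw [hK₂]
    constructor
    · intro hb n; obtain ⟨c, hc, hcb⟩ := Set.mem_iInter.mp hb n; exact ⟨c, hc, hcb⟩
    · intro h; exact Set.mem_iInter.mpr fun n => by obtain ⟨c, hc, hcb⟩ := h n; exact ⟨c, hc, hcb⟩
  -- Orthogonality of generators to K₂
  have horthgen : ∀ b ∈ K₂, ∀ (n : ℕ), ∀ w ∈ W, ⟪b, (u ^ n) w⟫_ℂ = 0 := by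
    intro b hb n w hw
    obtain ⟨c, hc, hcb⟩ := (hK2mem b).mp hb (n + 1)
    rw [← hcb, hpow2, hinner_pow]
    have hw' := (hW ▸ hw : w ∈ {x : H | x ∈ K ∧ ∀ y ∈ K, ⟪x, u y⟫_ℂ = 0})
    have h0 : ⟪w, u c⟫_ℂ = 0 := hw'.2 c hc
    rw [← inner_conj_symm, h0, map_zero]
  -- Orthogonality K₁ ⊥ K₂
  have horth : ∀ a ∈ K₁, ∀ b ∈ K₂, ⟪a, b⟫_ℂ = 0 := by
    intro a ha b hb
    have hker : (Submodule.span ℂ (⋃ n : ℕ, (u ^ n) '' W)) ≤ LinearMap.ker (innerSL ℂ b : H →ₗ[ℂ] ℂ) := by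
      apply Submodule.span_le.mpr
      rintro z hz
      obtain ⟨n, w, hw, rfl⟩ := Set.mem_iUnion.mp hz
      have : ⟪b, (u ^ n) w⟫_ℂ = 0 := horthgen b hb n w hw
      simpa [LinearMap.mem_ker] using this
    have hclosed : IsClosed ((LinearMap.ker (innerSL ℂ b : H →ₗ[ℂ] ℂ) : Submodule ℂ H) : Set H) :=
      ContinuousLinearMap.isClosed_ker (innerSL ℂ b)
    have hsub : K₁ ⊆ ((LinearMap.ker (innerSL ℂ b : H →ₗ[ℂ] ℂ) : Submodule ℂ H) : Set H) := by
      rw [hK₁]; exact closure_minimal hker hclosed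
    have : ⟪b, a⟫_ℂ = 0 := by
      have := hsub ha
      simpa [LinearMap.mem_ker] using this
    rw [← inner_conj_symm, this, map_zero]
  -- decomposition step: K = uK ⊕ W
  have hstep : ∀ c ∈ K, ∃ d ∈ K, ∃ w ∈ W, c = u d + w := by
    intro c hc
    set M : Submodule ℂ H := K.map (u : H →ₗ[ℂ] H) with hM
    have hMclosed : IsClosed (M : Set H) := by
      have hiso : Isometry u := AddMonoidHomClass.isometry_of_norm u hu
      have h1 : (M : Set H) = u '' K := by ext z; simp [hM, Submodule.mem_map]
      rw [h1]
      exact hiso.isClosedEmbedding.isClosedMap _ hK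
    haveI : CompleteSpace M := hMclosed.completeSpace_coe
    obtain ⟨d, hd, hdd⟩ : ∃ d ∈ K, u d = (M.orthogonalProjectionOnto c : H) :=
      (M.orthogonalProjectionOnto c).2
    refine ⟨d, hd, c - u d, ?_, by abel⟩
    rw [hW]
    constructor
    · exact K.sub_mem hc (hinv d hd)
    · intro y hy
      have h1 : c - (M.orthogonalProjectionOnto c : H) ∈ Mᗮ :=
        Submodule.sub_starProjection_mem_orthogonal c
      have h2 : u y ∈ M := ⟨y, hy, rfl⟩
      have := (Submodule.mem_orthogonal' M _).mp h1 (u y) h2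
      rwa [hdd]
  -- key induction: members of K orthogonal to all uⁿW lie in every uⁿK
  have hkey : ∀ b ∈ K, (∀ (n : ℕ), ∀ w ∈ W, ⟪b, (u ^ n) w⟫_ℂ = 0) →
      ∀ n : ℕ, ∃ c ∈ K, (u ^ n) c = b := by
    intro b hb hborth n
    induction n with
    | zero => exact ⟨b, hb, by simp⟩
    | succ n ih =>
      obtain ⟨c, hc, hcb⟩ := ih
      obtain ⟨d, hd, w, hw, hcdw⟩ := hstep c hc
      have hw' := (hW ▸ hw : w ∈ {x : H | x ∈ K ∧ ∀ y ∈ K, ⟪x, u y⟫_ℂ = 0})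
      have hbw : b = (u ^ (n+1)) d + (u ^ n) w := by
        rw [← hcb, hcdw, map_add, hpow2]
      have h2 : ⟪(u ^ (n+1)) d, (u ^ n) w⟫_ℂ = 0 := by
        rw [hpow2, hinner_pow]
        have h0 : ⟪w, u d⟫_ℂ = 0 := hw'.2 d hd
        rw [← inner_conj_symm, h0, map_zero]
      have h3 : ⟪(u ^ n) w, (u ^ n) w⟫_ℂ = 0 := by
        have h4 : ⟪b, (u ^ n) w⟫_ℂ = 0 := hborth n w hw
        rw [hbw, inner_add_left, h2, zero_add] at h4
        exact h4
      have hw0 : w = 0 := by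
        rw [hinner_pow] at h3
        exact inner_self_eq_zero.mp h3
      refine ⟨d, hd, ?_⟩
      rw [hbw, hw0, map_zero, add_zero]
  -- surjectivity of u on K₂
  have hK2surj : u '' K₂ = K₂ := by
    apply Set.Subset.antisymm
    · rintro _ ⟨b, hb, rfl⟩
      rw [hK2mem]
      intro n
      cases n with
      | zero => exact ⟨u b, hinv b (hK2K hb), by simp⟩
      | succ n =>
        obtain ⟨c, hc, hcb⟩ := (hK2mem b).mp hb n
        exact ⟨c, hc, by rw [hpow1, hcb]⟩
    · intro b hb
      obtain ⟨c, hc, hcb⟩ := (hK2mem b).mp hb 1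
      have hc1 : (u ^ 1) c = u c := by simp [pow_one]
      rw [hc1] at hcb
      refine ⟨c, ?_, hcb⟩
      rw [hK2mem]
      intro n
      obtain ⟨e, he, heb⟩ := (hK2mem b).mp hb (n + 1)
      refine ⟨e, he, ?_⟩
      apply huinj
      rw [← hpow1, heb, hcb]
  refine ⟨horth, ?_, hK1K, hK2K, hK2surj⟩
  -- existence of the decomposition
  intro x hx
  set S : Submodule ℂ H := (Submodule.span ℂ (⋃ n : ℕ, (u ^ n) '' W)).topologicalClosure with hS
  have hSK1 : (S : Set H) = K₁ := by
    rw [hK₁, hS, Submodule.topologicalClosure_coe]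
  haveI : CompleteSpace S :=
    (Submodule.isClosed_topologicalClosure _).completeSpace_coe
  set a : H := (S.orthogonalProjectionOnto x : H) with ha
  have haS : a ∈ S := (S.orthogonalProjectionOnto x).2
  have haK1 : a ∈ K₁ := by rw [← hSK1]; exact haS
  have hbK : x - a ∈ K := K.sub_mem hx (hK1K haK1)
  have hborth : ∀ (n : ℕ), ∀ w ∈ W, ⟪x - a, (u ^ n) w⟫_ℂ = 0 := by
    intro n w hw
    have h1 : x - a ∈ Sᗮ := Submodule.sub_starProjection_mem_orthogonal x
    have h2 : (u ^ n) w ∈ S :=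
      Submodule.le_topologicalClosure _
        (Submodule.subset_span (Set.mem_iUnion.mpr ⟨n, Set.mem_image_of_mem _ hw⟩))
    exact (Submodule.mem_orthogonal' S _).mp h1 _ h2
  have hbK2 : x - a ∈ K₂ := (hK2mem _).mpr (hkey _ hbK hborth)
  exact ⟨a, haK1, x - a, hbK2, by abel⟩
end
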